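/- Let Q be a unital quantale and X a set. For each λ : X → Q, the map j_X(λ) : Q^X → Q defined by j_X(λ)(γ) = ⋀_x γ(x) ⧸ λ(x) determines an injective map j_X : Q^X → Q^{Q^X}, provided Q has at least two elements. -/

import Mathlib

/-- Left implication in a unital quantale: `ldd r q = r ⧸ q`. -/
def ldd {Q : Type*} [Monoid Q] [CompleteLattice Q] (r q : Q) : Q := sSup {p | p * q ≤ r}

/-- Right implication in a unital quantale: `rdd p r = p ⧹ r`. -/
def rdd {Q : Type*} [Monoid Q] [CompleteLattice Q] (p r : Q) : Q := sSup {q | p * q ≤ r}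

/-- Image of a `Q`-valued map along `f`. -/
noncomputable def fim {X Y : Type*} {Q : Type*} [CompleteLattice Q] (f : X → Y) (α : X → Q) :
    Y → Q := fun y => ⨆ x ∈ f ⁻¹' {y}, α x

/-!
Evaluating `j_X(λ)` at `λ` itself recovers `λ`: `k ≤ γ ⇙ λ` holds exactly when `λ ≤ γ`, so
`j_X(λ)` determines the set of maps above `λ`, and hence `λ`, as in the Yoneda lemma.
-/

section

variable {X Q : Type*} [Monoid Q] [CompleteLattice Q] [IsQuantale Q]

theorem le_ldd_iff {p q r : Q} : p ≤ ldd r q ↔ p * q ≤ r :=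
  Quantale.leftMulResiduation_le_iff_mul_le

theorem one_le_ldd_iff {q r : Q} : 1 ≤ ldd r q ↔ q ≤ r := by
  rw [le_ldd_iff, one_mul]

theorem one_le_iInf_ldd_iff {γ lam : X → Q} : 1 ≤ ⨅ x, ldd (γ x) (lam x) ↔ lam ≤ γ := by
  simp only [le_iInf_iff, one_le_ldd_iff, Pi.le_def]

end

theorem j_injective_general {X : Type*} {Q : Type*} [Monoid Q] [CompleteLattice Q]
    [IsQuantale Q] :
    Function.Injective (fun (lam : X → Q) => fun (γ : X → Q) => ⨅ x, ldd (γ x) (lam x)) := by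
  intro lam mu h
  have h_le {u v : X → Q} (huv : (fun γ : X → Q => ⨅ x, ldd (γ x) (u x)) =
      fun γ => ⨅ x, ldd (γ x) (v x)) : v ≤ u :=
    one_le_iInf_ldd_iff.mp (congrFun huv u ▸ one_le_iInf_ldd_iff.mpr le_rfl)
  exact le_antisymm (h_le h.symm) (h_le h)

theorem j_injective {X : Type*} {Q : Type*} [Monoid Q] [CompleteLattice Q]
    [IsQuantale Q] [Nontrivial Q] :
    Function.Injective (fun (lam : X → Q) => fun (γ : X → Q) => ⨅ x, ldd (γ x) (lam x)) :=
  j_injective_general
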